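/- arXiv:2001.04347 — 2 statements merged into one kernel-verified Lean document; each statement's English description precedes it below -/
import Mathlib

section
/- Let T = (S, Σ, κ) be a stochastic transition system and let A ∈ Σ be an attractor for T. Then A is almost surely visited infinitely often from any initial distribution: for every initial probability distribution μ on (S, Σ), Prob_μ(GF A) = 1. -/
open MeasureTheory ProbabilityTheory Filter Set ENNReal

namespace STS

variable {S : Type*} [MeasurableSpace S]

/-- The finite-dimensional distributions of the Markov chain with initial distribution `μ`
and transition kernel `κ`: `finDist κ μ n` is the joint law of the first `n+1` states. -/
noncomputable def finDist (κ : Kernel S S) (μ : Measure S) : (n : ℕ) → Measure (Fin (n + 1) → S)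
  | 0 => μ.map (fun s => fun _ => s)
  | n + 1 => (finDist κ μ n).bind (fun x => (κ (x (Fin.last n))).map (Fin.snoc x))

/-- `P` assigns to each initial probability distribution `μ` the probability measure `Prob_μ`
on the space of runs `ℕ → S` (given by the Ionescu–Tulcea theorem), i.e. the unique probability
measure under which the coordinate process is a Markov chain with initial distribution `μ` and
transition kernel `κ`.  This is characterized by the finite-dimensional distributions. -/
def IsMarkovMeasureFamily (κ : Kernel S S) (P : Measure S → Measure (ℕ → S)) : Prop :=
  ∀ μ : Measure S, IsProbabilityMeasure μ →
    IsProbabilityMeasure (P μ) ∧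
    ∀ n : ℕ, (P μ).map (fun ω (i : Fin (n + 1)) => ω i.1) = finDist κ μ n

/-- `F B`: the set of runs that visit `B` at some point. -/
def FEv (B : Set S) : Set (ℕ → S) := {ω | ∃ k, ω k ∈ B}

/-- `F^{≤n} B`: the set of runs that visit `B` within `n` steps. -/
def FLe (n : ℕ) (B : Set S) : Set (ℕ → S) := {ω | ∃ k ≤ n, ω k ∈ B}

/-- `B' U B`: runs that stay in `B'` until a first visit to `B`. -/
def Until (B' B : Set S) : Set (ℕ → S) := {ω | ∃ k, ω k ∈ B ∧ ∀ j < k, ω j ∈ B'}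

/-- `B' U^{≤n} B`: runs that stay in `B'` until a first visit to `B`, within `n` steps. -/
def UntilLe (n : ℕ) (B' B : Set S) : Set (ℕ → S) :=
  {ω | ∃ k ≤ n, ω k ∈ B ∧ ∀ j < k, ω j ∈ B'}

/-- `G B`: runs that always stay in `B`. -/
def Glob (B : Set S) : Set (ℕ → S) := {ω | ∀ k, ω k ∈ B}

/-- `GF B`: runs that visit `B` infinitely often. -/
def GlobFEv (B : Set S) : Set (ℕ → S) := {ω | ∀ n : ℕ, ∃ k ≥ n, ω k ∈ B}

/-- The avoid-set `B̃` of `B`: states from which `B` is reached with probability `0`. -/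
def avoidSet (P : Measure S → Measure (ℕ → S)) (B : Set S) : Set S :=
  {s : S | P (Measure.dirac s) (FEv B) = 0}

/-- The STS is decisive w.r.t. `B`: from any initial distribution, almost surely either `B` or
its avoid-set `B̃` is eventually visited. -/
def Decisive (P : Measure S → Measure (ℕ → S)) (B : Set S) : Prop :=
  ∀ μ : Measure S, IsProbabilityMeasure μ → P μ (FEv B ∪ FEv (avoidSet P B)) = 1

/-- `A` is an attractor: it is reached almost surely from any initial distribution. -/
def IsAttractor (P : Measure S → Measure (ℕ → S)) (A : Set S) : Prop :=
  ∀ μ : Measure S, IsProbabilityMeasure μ → P μ (FEv A) = 1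

/-!
By the Markov property at time `n`, the shifted run `k ↦ ω (n + k)` is distributed as `Prob_ν`,
where `ν` is the law of `ω n`; both laws have the same finite-dimensional distributions, and
these determine a measure on runs. Since `A` is an attractor, the shifted run visits `A`
almost surely for every `n`, and `GF A` is the countable intersection of these events.
-/

section GiryMonad

variable {α β γ : Type*} [MeasurableSpace α] [MeasurableSpace β] [MeasurableSpace γ]

theorem _root_.MeasureTheory.Measure.map_bind {μ : Measure α} {f : α → Measure β} {g : β → γ}
    (hf : Measurable f) (hg : Measurable g) :
    (μ.bind f).map g = μ.bind (fun x => (f x).map g) := by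
  rw [Measure.bind, Measure.bind, ← Measure.join_map_map hg,
    Measure.map_map (Measure.measurable_map g hg) hf]
  rfl

theorem _root_.MeasureTheory.Measure.bind_map {μ : Measure α} {f : β → Measure γ} {g : α → β}
    (hf : Measurable f) (hg : Measurable g) :
    (μ.map g).bind f = μ.bind (f ∘ g) := by
  rw [Measure.bind, Measure.bind, Measure.map_map hf hg]

end GiryMonad

lemma measurable_snoc_uncurry (n : ℕ) :
    Measurable (fun p : (Fin (n + 1) → S) × S => (Fin.snoc p.1 p.2 : Fin (n + 2) → S)) := by
  refine measurable_pi_lambda _ fun i => ?_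
  induction i using Fin.lastCases with
  | last => simpa using measurable_snd
  | cast j =>
    simp only [Fin.snoc_castSucc]
    exact (measurable_pi_apply j).comp measurable_fst

lemma measurable_snoc {n : ℕ} (x : Fin (n + 1) → S) :
    Measurable (Fin.snoc (α := fun _ => S) x) :=
  (measurable_snoc_uncurry n).comp measurable_prodMk_left

lemma measurable_kernel_map_snoc (κ : Kernel S S) [IsSFiniteKernel κ] (n : ℕ) :
    Measurable fun x : Fin (n + 1) → S =>
      (κ (x (Fin.last n))).map (Fin.snoc (α := fun _ => S) x) := by
  refine Measure.measurable_of_measurable_coe _ fun B hB => ?_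
  have hmap : (fun x : Fin (n + 1) → S => (κ (x (Fin.last n))).map (Fin.snoc x) B) =
      fun x => κ (x (Fin.last n)) (Prod.mk x ⁻¹' ((fun p => Fin.snoc p.1 p.2) ⁻¹' B)) :=
    funext fun x => Measure.map_apply (measurable_snoc x) hB
  rw [hmap]
  exact Kernel.measurable_kernel_prodMk_left (κ := κ.comap _ (measurable_pi_apply (Fin.last n)))
    (measurable_snoc_uncurry n hB)

def drop {T : Type*} (n m : ℕ) (x : Fin (n + m + 1) → T) : Fin (m + 1) → T :=
  fun i => x ⟨n + i, by omega⟩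

lemma measurable_drop (n m : ℕ) : Measurable (drop (T := S) n m) :=
  measurable_pi_lambda _ fun _ => measurable_pi_apply _

lemma drop_snoc {T : Type*} (n m : ℕ) (x : Fin (n + m + 1) → T) (s : T) :
    drop n (m + 1) (Fin.snoc x s) = Fin.snoc (drop n m x) s := by
  funext i
  simp [drop, Fin.snoc]

lemma map_drop_finDist (κ : Kernel S S) [IsSFiniteKernel κ] (μ : Measure S) (n m : ℕ) :
    (finDist κ μ (n + m)).map (drop n m) =
      finDist κ ((finDist κ μ n).map (fun x => x (Fin.last n))) m := by
  induction m with
  | zero =>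
    rw [finDist, Measure.map_map (by fun_prop) (by fun_prop)]
    congr 1
    funext x i
    rw [Fin.fin_one_eq_zero i]
    rfl
  | succ m ih =>
    calc (finDist κ μ (n + (m + 1))).map (drop n (m + 1))
        = (finDist κ μ (n + m)).bind
            (fun x => ((κ (x (Fin.last (n + m)))).map (Fin.snoc x)).map (drop n (m + 1))) :=
          Measure.map_bind (measurable_kernel_map_snoc κ _) (measurable_drop _ _)
      _ = (finDist κ μ (n + m)).bind
            (fun x => (κ (drop n m x (Fin.last m))).map (Fin.snoc (drop n m x))) := by
          congr 1
          funext x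
          refine (Measure.map_map (measurable_drop n (m + 1)) (measurable_snoc x)).trans ?_
          congr 1
          funext s
          exact drop_snoc n m x s
      _ = ((finDist κ μ (n + m)).map (drop n m)).bind
            (fun y => (κ (y (Fin.last m))).map (Fin.snoc y)) :=
          (Measure.bind_map (measurable_kernel_map_snoc κ m) (measurable_drop n m)).symm
      _ = _ := by rw [ih]; rfl

def initSeg {T : Type*} (m : ℕ) (ω : ℕ → T) : Fin (m + 1) → T := fun i => ω i

lemma measurable_initSeg (m : ℕ) : Measurable (initSeg (T := S) m) :=
  measurable_pi_lambda _ fun _ => measurable_pi_apply _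

lemma IsMarkovMeasureFamily.map_initSeg {κ : Kernel S S} {P : Measure S → Measure (ℕ → S)}
    (hP : IsMarkovMeasureFamily κ P) {μ : Measure S} (hμ : IsProbabilityMeasure μ) (n : ℕ) :
    (P μ).map (initSeg n) = finDist κ μ n :=
  (hP μ hμ).2 n

lemma measure_ext_of_map_initSeg {μ ν : Measure (ℕ → S)} [IsFiniteMeasure ν]
    (h : ∀ m, μ.map (initSeg m) = ν.map (initSeg m)) : μ = ν := by
  refine IsProjectiveLimit.unique (P := fun I => ν.map I.restrict) (fun I => ?_) (fun I => rfl)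
  obtain ⟨m, hm⟩ : ∃ m, ∀ i ∈ I, i < m + 1 :=
    ⟨I.sup id, fun i hi => Nat.lt_succ_of_le (Finset.le_sup (f := id) hi)⟩
  have hg : Measurable (fun (y : Fin (m + 1) → S) (i : I) => y ⟨i, hm i i.2⟩) :=
    measurable_pi_lambda _ fun _ => measurable_pi_apply _
  have hfactor : (I.restrict : (ℕ → S) → (I → S)) =
      (fun (y : Fin (m + 1) → S) (i : I) => y ⟨i, hm i i.2⟩) ∘ initSeg m := rfl
  simp only [hfactor, ← Measure.map_map hg (measurable_initSeg m), h m]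

def shift {T : Type*} (n : ℕ) (ω : ℕ → T) : ℕ → T := fun k => ω (n + k)

lemma measurable_shift (n : ℕ) : Measurable (shift (T := S) n) :=
  measurable_pi_lambda _ fun _ => measurable_pi_apply _

theorem IsMarkovMeasureFamily.map_shift {κ : Kernel S S} [IsSFiniteKernel κ]
    {P : Measure S → Measure (ℕ → S)} (hP : IsMarkovMeasureFamily κ P) {μ : Measure S}
    (hμ : IsProbabilityMeasure μ) (n : ℕ) :
    (P μ).map (shift n) = P ((P μ).map (fun ω => ω n)) := by
  have := (hP μ hμ).1
  have hν : IsProbabilityMeasure ((P μ).map (fun ω => ω n)) :=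
    Measure.isProbabilityMeasure_map (measurable_pi_apply n).aemeasurable
  have := (hP _ hν).1
  have hlaw : (P μ).map (fun ω => ω n) = (finDist κ μ n).map (fun x => x (Fin.last n)) := by
    rw [← hP.map_initSeg hμ n, Measure.map_map (measurable_pi_apply _) (measurable_initSeg n)]
    rfl
  refine measure_ext_of_map_initSeg fun m => ?_
  calc ((P μ).map (shift n)).map (initSeg m)
      = ((P μ).map (initSeg (n + m))).map (drop n m) := by
        rw [Measure.map_map (measurable_initSeg m) (measurable_shift n),
          Measure.map_map (measurable_drop n m) (measurable_initSeg (n + m))]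
        rfl
    _ = (P ((P μ).map (fun ω => ω n))).map (initSeg m) := by
        rw [hP.map_initSeg hμ, map_drop_finDist, ← hlaw, hP.map_initSeg hν]

lemma measurableSet_FEv {B : Set S} (hB : MeasurableSet B) : MeasurableSet (FEv B) := by
  simp only [FEv, ofPred_exists]
  exact .iUnion fun k => measurable_pi_apply k hB

lemma globFEv_eq_iInter_preimage_shift {T : Type*} (B : Set T) :
    GlobFEv B = ⋂ n, shift n ⁻¹' FEv B := by
  ext ω
  simp only [GlobFEv, FEv, shift, mem_iInter, mem_preimage, mem_ofPred_eq]
  refine forall_congr' fun n =>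
    ⟨fun ⟨k, hnk, hk⟩ => ⟨k - n, ?_⟩, fun ⟨j, hj⟩ => ⟨n + j, by omega, hj⟩⟩
  rwa [Nat.add_sub_cancel' hnk]

/-- An attractor is almost surely visited infinitely often from any initial
distribution. -/
theorem attractor_visited_infinitely_often
    (κ : Kernel S S) [IsMarkovKernel κ]
    (P : Measure S → Measure (ℕ → S)) (hP : IsMarkovMeasureFamily κ P)
    (A : Set S) (hA : MeasurableSet A) (hattr : IsAttractor P A)
    (μ : Measure S) (hμ : IsProbabilityMeasure μ) :
    P μ (GlobFEv A) = 1 := by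
  have := (hP μ hμ).1
  have hvisit : ∀ n, P μ (shift n ⁻¹' FEv A)ᶜ = 0 := fun n => by
    have hν := Measure.isProbabilityMeasure_map (μ := P μ) (measurable_pi_apply n).aemeasurable
    have := (hP _ hν).1
    rw [← preimage_compl, ← Measure.map_apply (measurable_shift n) (measurableSet_FEv hA).compl,
      hP.map_shift hμ n, prob_compl_eq_zero_iff (measurableSet_FEv hA)]
    exact hattr _ hν
  rw [globFEv_eq_iInter_preimage_shift, ← prob_compl_eq_zero_iff
    (.iInter fun n => measurable_shift n (measurableSet_FEv hA)), compl_iInter]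
  exact measure_iUnion_null hvisit

end STS
end

section
/- Consider the random-walk STS T on S = ℕ (with the discrete σ-algebra) whose Markov kernel satisfies κ(0, ·) = δ_1 and, for n ≥ 1, κ(n, ·) = p·δ_{n+1} + (1−p)·δ_{n−1}, where 1/2 < p < 1. Then Prob_{δ_1}(F {0}) < 1 and the avoid-set of B = {0} is empty (for every state s ∈ ℕ, Prob_{δ_s}(F {0}) > 0); consequently, Prob_{δ_1}(F B ∪ F B̃) < 1, i.e., T is not decisive with respect to B = {0}. -/
open MeasureTheory ProbabilityTheory Filter Set ENNReal

namespace STS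

variable {S : Type*} [MeasurableSpace S]

/-! With `r = (1 - p) / p < 1`, the function `s ↦ r ^ s` is harmonic for the walk away from `0`
and equals `1` at `0`. Its value at the current state, frozen at `1` once `0` has been visited, is
therefore a supermartingale, so `0` is reached from `s` with probability at most `r ^ s`
(gambler's ruin). On the other hand the path `s, s - 1, …, 0` has probability `(1 - p) ^ s > 0`,
so no state avoids `0`. -/

section Runs

variable {S : Type*}

lemma fEv_empty : FEv (∅ : Set S) = ∅ := by
  simp [FEv]

lemma fEv_eq_iUnion_fLe (B : Set S) : FEv B = ⋃ n, FLe n B := by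
  ext ω
  simp only [FEv, FLe, Set.mem_iUnion]
  exact ⟨fun ⟨k, hk⟩ ↦ ⟨k, k, le_rfl, hk⟩, fun ⟨_, k, _, hk⟩ ↦ ⟨k, hk⟩⟩

lemma monotone_fLe (B : Set S) : Monotone (fun n ↦ FLe n B) :=
  fun _ _ hab _ ⟨k, hk, hkB⟩ ↦ ⟨k, hk.trans hab, hkB⟩

end Runs

section DiscreteChain

variable {S : Type*} [MeasurableSpace S] [Countable S] [MeasurableSingletonClass S]
  {κ : Kernel S S} {μ : Measure S} {P : Measure S → Measure (ℕ → S)} {B : Set S}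

lemma lintegral_finDist_succ (n : ℕ) (f : (Fin (n + 2) → S) → ℝ≥0∞) :
    ∫⁻ y, f y ∂finDist κ μ (n + 1) =
      ∫⁻ x, ∫⁻ t, f (Fin.snoc x t) ∂κ (x (Fin.last n)) ∂finDist κ μ n := by
  rw [finDist, Measure.lintegral_bind (measurable_of_countable _).aemeasurable
    (measurable_of_countable _).aemeasurable]
  simp_rw [lintegral_map (measurable_of_countable f) (measurable_of_countable _)]

lemma finDist_succ_apply (n : ℕ) (A : Set (Fin (n + 2) → S)) :
    finDist κ μ (n + 1) A =
      ∫⁻ x, κ (x (Fin.last n)) (Fin.snoc (α := fun _ ↦ S) x ⁻¹' A) ∂finDist κ μ n := by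
  rw [finDist, Measure.bind_apply (Set.to_countable A).measurableSet
    (measurable_of_countable _).aemeasurable]
  simp_rw [Measure.map_apply (measurable_of_countable _) (Set.to_countable A).measurableSet]

lemma finDist_dirac_path (γ : ℕ → S) (n : ℕ) :
    finDist κ (Measure.dirac (γ 0)) n {x | ∀ i, x i = γ i} =
      ∏ i ∈ Finset.range n, κ (γ i) {γ (i + 1)} := by
  induction n with
  | zero =>
    rw [finDist, Measure.map_apply (measurable_of_countable _) (Set.to_countable _).measurableSet,
      Measure.dirac_apply_of_mem (by simp)]
    simp
  | succ n ih =>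
    have hpre : ∀ x : Fin (n + 1) → S,
        κ (x (Fin.last n)) (Fin.snoc (α := fun _ ↦ S) x ⁻¹' {y | ∀ i, y i = γ i}) =
          {x : Fin (n + 1) → S | ∀ i, x i = γ i}.indicator (fun _ ↦ κ (γ n) {γ (n + 1)}) x := by
      intro x
      by_cases hx : ∀ i, x i = γ i
      · have hsnoc : Fin.snoc (α := fun _ ↦ S) x ⁻¹' {y | ∀ i, y i = γ i} = {γ (n + 1)} := by
          ext t
          simp [Fin.forall_fin_succ', hx]
        simp [hsnoc, hx]
      · have hsnoc : Fin.snoc (α := fun _ ↦ S) x ⁻¹' {y | ∀ i, y i = γ i} = ∅ :=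
          Set.eq_empty_of_forall_notMem fun t ht ↦ hx fun i ↦ by simpa using ht i.castSucc
        simp [hsnoc, hx]
    rw [finDist_succ_apply, Finset.prod_range_succ, ← ih]
    simp_rw [hpre]
    rw [lintegral_indicator_const (Set.to_countable _).measurableSet, mul_comm]

namespace IsMarkovMeasureFamily

variable (hP : IsMarkovMeasureFamily κ P)
include hP

lemma measure_fLe [IsProbabilityMeasure μ] (n : ℕ) (B : Set S) :
    P μ (FLe n B) = finDist κ μ n {x | ∃ i, x i ∈ B} := by
  have hrestrict : Measurable fun (ω : ℕ → S) (i : Fin (n + 1)) ↦ ω i :=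
    measurable_pi_lambda _ fun i ↦ measurable_pi_apply _
  have hpre : (fun (ω : ℕ → S) (i : Fin (n + 1)) ↦ ω i) ⁻¹' {x | ∃ i, x i ∈ B} = FLe n B := by
    ext ω
    simp only [Set.mem_preimage, FLe]
    exact ⟨fun ⟨i, hi⟩ ↦ ⟨i, by omega, hi⟩, fun ⟨k, hk, hkB⟩ ↦ ⟨⟨k, by omega⟩, hkB⟩⟩
  rw [← (hP μ ‹_›).2 n, Measure.map_apply hrestrict (Set.to_countable _).measurableSet, hpre]

lemma measure_fEv [IsProbabilityMeasure μ] (B : Set S) :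
    P μ (FEv B) = ⨆ n, finDist κ μ n {x | ∃ i, x i ∈ B} := by
  simp_rw [fEv_eq_iUnion_fLe, (monotone_fLe B).measure_iUnion, hP.measure_fLe]

lemma measure_fEv_ne_zero_of_path (γ : ℕ → S) (n : ℕ) (hγn : γ n ∈ B)
    (hstep : ∀ i < n, κ (γ i) {γ (i + 1)} ≠ 0) :
    P (Measure.dirac (γ 0)) (FEv B) ≠ 0 := by
  have hpath : finDist κ (Measure.dirac (γ 0)) n {x | ∀ i, x i = γ i} ≠ 0 := by
    rw [finDist_dirac_path]
    exact Finset.prod_ne_zero_iff.2 fun i hi ↦ hstep i (Finset.mem_range.1 hi)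
  have hsub : {x : Fin (n + 1) → S | ∀ i, x i = γ i} ⊆ {x | ∃ i, x i ∈ B} :=
    fun x hx ↦ ⟨Fin.last n, by rw [hx (Fin.last n), Fin.val_last]; exact hγn⟩
  rw [hP.measure_fEv, ← pos_iff_ne_zero] at *
  exact hpath.trans_le ((measure_mono hsub).trans (le_iSup (fun n ↦ finDist _ _ n _) n))

end IsMarkovMeasureFamily

open Classical in
noncomputable def stoppedValue (B : Set S) (f : S → ℝ≥0∞) (n : ℕ) (x : Fin (n + 1) → S) :
    ℝ≥0∞ :=
  if ∃ i, x i ∈ B then 1 else f (x (Fin.last n))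

variable [IsMarkovKernel κ] {f : S → ℝ≥0∞}

lemma lintegral_stoppedValue_le (hB : ∀ s ∈ B, 1 ≤ f s)
    (hf : ∀ s ∉ B, ∫⁻ t, f t ∂κ s ≤ f s) (n : ℕ) :
    ∫⁻ x, stoppedValue B f n x ∂finDist κ μ n ≤ ∫⁻ s, f s ∂μ := by
  induction n with
  | zero =>
    rw [finDist, lintegral_map (measurable_of_countable _) (measurable_of_countable _)]
    refine lintegral_mono fun s ↦ ?_
    by_cases hs : s ∈ B <;> simp [stoppedValue, hs, hB]
  | succ n ih =>
    refine le_trans ?_ ih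
    rw [lintegral_finDist_succ]
    refine lintegral_mono fun x ↦ ?_
    by_cases hx : ∃ i, x i ∈ B
    · have hsnoc : ∀ t, stoppedValue B f (n + 1) (Fin.snoc x t) = 1 := fun t ↦ by
        obtain ⟨i, hi⟩ := hx
        exact if_pos ⟨i.castSucc, by simpa using hi⟩
      simp only [hsnoc, lintegral_const, measure_univ, mul_one]
      exact (if_pos hx).ge
    · have hsnoc : ∀ t, stoppedValue B f (n + 1) (Fin.snoc x t) ≤ f t := fun t ↦ by
        by_cases ht : t ∈ B
        · exact (if_pos ⟨Fin.last _, by simpa using ht⟩).trans_le (hB t ht)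
        · refine (if_neg ?_).trans_le (by simp)
          rintro ⟨i, hi⟩
          induction i using Fin.lastCases with
          | last => exact ht (by simpa using hi)
          | cast i => exact hx ⟨i, by simpa using hi⟩
      calc ∫⁻ t, stoppedValue B f (n + 1) (Fin.snoc x t) ∂κ (x (Fin.last n))
          ≤ ∫⁻ t, f t ∂κ (x (Fin.last n)) := lintegral_mono hsnoc
        _ ≤ f (x (Fin.last n)) := hf _ fun h ↦ hx ⟨_, h⟩
        _ = stoppedValue B f n x := (if_neg hx).symm

lemma IsMarkovMeasureFamily.measure_fEv_le_lintegral (hP : IsMarkovMeasureFamily κ P)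
    [IsProbabilityMeasure μ] (hB : ∀ s ∈ B, 1 ≤ f s) (hf : ∀ s ∉ B, ∫⁻ t, f t ∂κ s ≤ f s) :
    P μ (FEv B) ≤ ∫⁻ s, f s ∂μ := by
  rw [hP.measure_fEv]
  refine iSup_le fun n ↦ ?_
  calc finDist κ μ n {x | ∃ i, x i ∈ B}
      = ∫⁻ x, {x : Fin (n + 1) → S | ∃ i, x i ∈ B}.indicator 1 x ∂finDist κ μ n :=
        (lintegral_indicator_one (Set.to_countable _).measurableSet).symm
    _ ≤ ∫⁻ x, stoppedValue B f n x ∂finDist κ μ n := by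
        refine lintegral_mono fun x ↦ ?_
        by_cases hx : ∃ i, x i ∈ B
        · simp [stoppedValue, hx]
        · simp [hx]
    _ ≤ ∫⁻ s, f s ∂μ := lintegral_stoppedValue_le hB hf n

end DiscreteChain

section RandomWalk

variable {κ : Kernel ℕ ℕ} {p : ℝ≥0∞}
  (hκ : ∀ n : ℕ, κ (n + 1) = p • Measure.dirac (n + 2) + (1 - p) • Measure.dirac n)
include hκ

lemma randomWalk_apply_pred (n : ℕ) : κ (n + 1) {n} = 1 - p := by
  simp [hκ]

lemma lintegral_randomWalk_pow (hp0 : p ≠ 0) (hp1 : p ≤ 1) (m : ℕ) :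
    ∫⁻ t, ((1 - p) / p) ^ t ∂κ (m + 1) = ((1 - p) / p) ^ (m + 1) := by
  set r := (1 - p) / p
  have hrp : r * p = 1 - p := ENNReal.div_mul_cancel hp0 (ne_top_of_le_ne_top one_ne_top hp1)
  have hqp : 1 - p + p = 1 := tsub_add_cancel_of_le hp1
  rw [hκ, lintegral_add_measure, lintegral_smul_measure, lintegral_smul_measure, lintegral_dirac,
    lintegral_dirac]
  calc p * r ^ (m + 2) + (1 - p) * r ^ m = r ^ (m + 1) * (r * p + p) := by rw [← hrp]; ring
    _ = r ^ (m + 1) := by rw [hrp, hqp, mul_one]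

end RandomWalk

theorem randomWalk_gt_half_not_decisive_general
    (κ : Kernel ℕ ℕ) [IsMarkovKernel κ]
    (p : ℝ≥0∞) (hp1 : 1 / 2 < p) (hp2 : p < 1)
    (hκ : ∀ n : ℕ, κ (n + 1) = p • Measure.dirac (n + 2) + (1 - p) • Measure.dirac n)
    (P : Measure ℕ → Measure (ℕ → ℕ)) (hP : IsMarkovMeasureFamily κ P) :
    P (Measure.dirac 1) (FEv {0}) < 1 ∧
      (∀ s : ℕ, 0 < P (Measure.dirac s) (FEv {0})) ∧
      avoidSet P ({0} : Set ℕ) = ∅ ∧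
      P (Measure.dirac 1) (FEv {0} ∪ FEv (avoidSet P ({0} : Set ℕ))) < 1 ∧
      ¬ Decisive P ({0} : Set ℕ) := by
  have hp0 : p ≠ 0 := (pos_of_gt hp1).ne'
  have hratio : (1 - p) / p < 1 := by
    rw [ENNReal.div_lt_iff (Or.inl hp0) (Or.inl hp2.ne_top), one_mul]
    calc 1 - p ≤ 1 - 1 / 2 := tsub_le_tsub_left hp1.le 1
      _ = 1 / 2 := ENNReal.sub_half one_ne_top
      _ < p := hp1
  have hreach : ∀ s, P (Measure.dirac s) (FEv {0}) ≠ 0 := fun s ↦ by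
    refine hP.measure_fEv_ne_zero_of_path (fun i ↦ s - i) s (by simp) fun i hi ↦ ?_
    rw [show s - i = s - (i + 1) + 1 by omega, randomWalk_apply_pred hκ]
    exact (tsub_pos_of_lt hp2).ne'
  have hreach_one : P (Measure.dirac 1) (FEv {0}) < 1 := by
    refine (hP.measure_fEv_le_lintegral (f := fun t ↦ ((1 - p) / p) ^ t) (by simp) ?_).trans_lt ?_
    · intro s hs
      obtain ⟨m, rfl⟩ := Nat.exists_eq_succ_of_ne_zero hs
      exact (lintegral_randomWalk_pow hκ hp0 hp2.le m).le
    · simpa using hratio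
  have havoid : avoidSet P ({0} : Set ℕ) = ∅ := Set.eq_empty_of_forall_notMem hreach
  have hunion : P (Measure.dirac 1) (FEv {0} ∪ FEv (avoidSet P ({0} : Set ℕ))) < 1 := by
    rwa [havoid, fEv_empty, Set.union_empty]
  exact ⟨hreach_one, fun s ↦ pos_iff_ne_zero.2 (hreach s), havoid, hunion,
    fun hdec ↦ hunion.ne (hdec _ inferInstance)⟩

/-- For the random walk on `ℕ` with parameter `1/2 < p < 1`, state `0` is
reached from `1` with probability `< 1`, the avoid-set of `{0}` is empty (every state reaches
`0` with positive probability); consequently `Prob_{δ_1}(F B ∪ F B̃) < 1` and the STS is not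
decisive w.r.t. `B = {0}`. -/
theorem randomWalk_gt_half_not_decisive
    (κ : Kernel ℕ ℕ) [IsMarkovKernel κ]
    (p : ℝ≥0∞) (hp1 : 1 / 2 < p) (hp2 : p < 1)
    (hκ0 : κ 0 = Measure.dirac 1)
    (hκ : ∀ n : ℕ, κ (n + 1) = p • Measure.dirac (n + 2) + (1 - p) • Measure.dirac n)
    (P : Measure ℕ → Measure (ℕ → ℕ)) (hP : IsMarkovMeasureFamily κ P) :
    P (Measure.dirac 1) (FEv {0}) < 1 ∧
      (∀ s : ℕ, 0 < P (Measure.dirac s) (FEv {0})) ∧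
      avoidSet P ({0} : Set ℕ) = ∅ ∧
      P (Measure.dirac 1) (FEv {0} ∪ FEv (avoidSet P ({0} : Set ℕ))) < 1 ∧
      ¬ Decisive P ({0} : Set ℕ) :=
  randomWalk_gt_half_not_decisive_general κ p hp1 hp2 hκ P hP

end STS
end
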